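/- arXiv:1705.09398 — 3 statements merged into one kernel-verified Lean document; each statement's English description precedes it below -/
import Mathlib

section
/- Let b₁+b₂ and b₂+b₃ be defined as the counts of k in {0,…,n} with k ≡ 1,2 (mod 4) and k ≡ 2,3 (mod 4) respectively, weighted by binomial coefficients C(n,k). Then Σ_{k≡1,2 (4)} C(n,k) = Σ_{k≡2,3 (4)} C(n,k) if and only if 4 divides n. -/
open Finset

noncomputable def imHom : GaussianInt →+ ℤ :=
  { toFun := Zsqrtd.im, map_zero' := rfl, map_add' := fun _ _ => rfl }

lemma sqrtd_pow_four : (Zsqrtd.sqrtd : GaussianInt)^4 = 1 := by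
  ext <;> simp [pow_succ]

lemma im_one_add_sqrtd_pow (n : ℕ) :
    ((1 + Zsqrtd.sqrtd : GaussianInt)^n).im =
      (∑ k ∈ range (n+1), ((Zsqrtd.sqrtd : GaussianInt)^(k % 4)).im * (n.choose k : ℤ)) := by
  rw [add_comm, add_pow]
  show imHom _ = _
  rw [map_sum]
  refine Finset.sum_congr rfl fun k _ => ?_
  have hk : (Zsqrtd.sqrtd : GaussianInt)^k = (Zsqrtd.sqrtd : GaussianInt)^(k % 4) := by
    conv_lhs => rw [← Nat.mod_add_div k 4, pow_add, pow_mul, sqrtd_pow_four, one_pow, mul_one]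
  show ((Zsqrtd.sqrtd : GaussianInt)^k * 1^(n-k) * (n.choose k : ℕ)).im = _
  rw [one_pow, mul_one, hk]
  simp [Zsqrtd.im_mul]

lemma one_add_sqrtd_pow_four : ((1 + Zsqrtd.sqrtd : GaussianInt))^4 = -4 := by
  ext <;> simp [pow_succ]

open Finset in
theorem counts_equal_iff_four_dvd (n : ℕ) (hn : 1 ≤ n) :
    (∑ k ∈ (Finset.range (n + 1)).filter (fun k => k % 4 = 1 ∨ k % 4 = 2),
        n.choose k) =
      (∑ k ∈ (Finset.range (n + 1)).filter (fun k => k % 4 = 2 ∨ k % 4 = 3),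
        n.choose k) ↔ 4 ∣ n := by
  have key : ((∑ k ∈ (Finset.range (n + 1)).filter (fun k => k % 4 = 1), n.choose k : ℕ) : ℤ)
      - (∑ k ∈ (Finset.range (n + 1)).filter (fun k => k % 4 = 3), n.choose k : ℕ)
      = ((1 + Zsqrtd.sqrtd : GaussianInt)^n).im := by
    rw [im_one_add_sqrtd_pow]
    push_cast
    rw [Finset.sum_filter, Finset.sum_filter, ← Finset.sum_sub_distrib]
    refine Finset.sum_congr rfl fun k _ => ?_
    have h4 : k % 4 < 4 := Nat.mod_lt _ (by norm_num)
    interval_cases h : k % 4 <;> simp [pow_succ]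
  have split : ∀ (a b : ℕ),
      (Finset.range (n + 1)).filter (fun k => k % 4 = a ∨ k % 4 = b) =
        (Finset.range (n + 1)).filter (fun k => k % 4 = a) ∪
        (Finset.range (n + 1)).filter (fun k => k % 4 = b) := by
    intro a b
    rw [← Finset.filter_or]
  have d1 : Disjoint ((Finset.range (n + 1)).filter (fun k => k % 4 = 1))
      ((Finset.range (n + 1)).filter (fun k => k % 4 = 2)) := by
    simp [Finset.disjoint_filter]; omega
  have d2 : Disjoint ((Finset.range (n + 1)).filter (fun k => k % 4 = 2))
      ((Finset.range (n + 1)).filter (fun k => k % 4 = 3)) := by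
    simp [Finset.disjoint_filter]; omega
  rw [split 1 2, split 2 3, Finset.sum_union d1, Finset.sum_union d2]
  have hpow : ((1 + Zsqrtd.sqrtd : GaussianInt))^n
      = (((-4 : ℤ)^(n/4) : ℤ) : GaussianInt) * (1 + Zsqrtd.sqrtd)^(n % 4) := by
    conv_lhs => rw [← Nat.div_add_mod n 4, pow_add, pow_mul, one_add_sqrtd_pow_four]
    push_cast
    ring
  have him : ((1 + Zsqrtd.sqrtd : GaussianInt)^n).im
      = (-4 : ℤ)^(n/4) * ((1 + Zsqrtd.sqrtd : GaussianInt)^(n % 4)).im := by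
    rw [hpow, Zsqrtd.im_mul, Zsqrtd.re_intCast, Zsqrtd.im_intCast]
    ring
  have hne : ((-4 : ℤ))^(n/4) ≠ 0 := pow_ne_zero _ (by norm_num)
  have h4 : n % 4 < 4 := Nat.mod_lt _ (by norm_num)
  constructor
  · intro h
    have h' : ((1 + Zsqrtd.sqrtd : GaussianInt)^n).im = 0 := by omega
    rw [him, mul_eq_zero] at h'
    rcases h' with h' | h'
    · exact absurd h' hne
    · interval_cases hh : n % 4
      · omega
      all_goals simp [pow_succ, Zsqrtd.im_mul, Zsqrtd.re_mul] at h'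
  · intro h
    have h0 : n % 4 = 0 := by omega
    have h' : ((1 + Zsqrtd.sqrtd : GaussianInt)^n).im = 0 := by
      rw [him, h0, pow_zero]
      simp
    omega
end

section
/- There is no n×n matrix P over 𝔽₂ with PᵀP = J + I (where J is the all-ones matrix) that is invertible; i.e., an antiorthogonal matrix over 𝔽₂ is never invertible. -/
open Matrix

theorem antiorthogonal_not_invertible {n : ℕ} (hn : 1 ≤ n)
    (P : Matrix (Fin n) (Fin n) (ZMod 2))
    (h : Pᵀ * P = Matrix.of (fun (i j : Fin n) => if i = j then 0 else 1)) :
    ¬ IsUnit P := by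
  intro hP
  have hinj := Matrix.vecMul_injective_iff_isUnit.2 hP
  have hcol : ∀ j, ∑ i, P i j = 0 := by
    intro j
    have hd := congrFun (congrFun h j) j
    simp only [Matrix.mul_apply, Matrix.transpose_apply, Matrix.of_apply, if_pos rfl] at hd
    have : ∀ a : ZMod 2, a * a = a := by decide
    calc ∑ i, P i j = ∑ i, P i j * P i j := by simp [this]
      _ = 0 := hd
  have h1 : (fun _ : Fin n => (1 : ZMod 2)) ᵥ* P = (fun _ : Fin n => (0 : ZMod 2)) ᵥ* P := by
    funext j
    simp [Matrix.vecMul, dotProduct, hcol j]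
  have := hinj h1
  have := congrFun this ⟨0, hn⟩
  simp at this
end

section
/- Every n×n orthogonal matrix P over 𝔽₂ (PᵀP = I) can be written as a product P = K₁ K₂ ⋯ Kₙ π where each Kᵢ is either the identity or of the form I + uᵢuᵢᵀ with uᵢ ∈ 𝔽₂ⁿ of even weight, and π is a permutation matrix. -/
open Matrix

namespace OrthFact

variable {n : ℕ}

private lemma sq2 (x : ZMod 2) : x * x = x := by revert x; decide

private lemma ne0 (x : ZMod 2) (h : x ≠ 0) : x = 1 := by revert x; decide

private lemma two0 : (1 : ZMod 2) + 1 = 0 := by decide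

def Good (A : Matrix (Fin n) (Fin n) (ZMod 2)) : Prop :=
  A = 1 ∨ ∃ u : Fin n → ZMod 2, (∑ j, u j = 0) ∧ A = 1 + Matrix.vecMulVec u u

lemma col_dot {Q : Matrix (Fin n) (Fin n) (ZMod 2)} (hQ : Qᵀ * Q = 1) (i i' : Fin n) :
    ∑ j, Q j i * Q j i' = if i = i' then 1 else 0 := by
  have h := congrFun (congrFun hQ i) i'
  simpa [mul_apply, one_apply] using h

lemma col_sum {Q : Matrix (Fin n) (Fin n) (ZMod 2)} (hQ : Qᵀ * Q = 1) (i : Fin n) :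
    ∑ j, Q j i = 1 := by
  have h := col_dot hQ i i
  rw [if_pos rfl] at h
  calc ∑ j, Q j i = ∑ j, Q j i * Q j i := by
        exact Finset.sum_congr rfl fun j _ => (sq2 _).symm
    _ = 1 := h

lemma K_invol {u : Fin n → ZMod 2} (hu : ∑ j, u j = 0) :
    (1 + vecMulVec u u) * (1 + vecMulVec u u) = 1 := by
  have hVV : vecMulVec u u * vecMulVec u u = 0 := by
    ext i j
    simp only [mul_apply, vecMulVec_apply, Matrix.zero_apply]
    have h1 : ∀ l, u i * u l * (u l * u j) = u i * u j * u l := by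
      intro l
      rw [show u i * u l * (u l * u j) = u i * u j * (u l * u l) by ring, sq2]
    rw [Finset.sum_congr rfl fun l _ => h1 l, ← Finset.mul_sum, hu, mul_zero]
  have h2 : vecMulVec u u + vecMulVec u u = 0 := by
    ext i j
    show vecMulVec u u i j + vecMulVec u u i j = (0 : ZMod 2)
    exact CharTwo.add_self_eq_zero _
  calc (1 + vecMulVec u u) * (1 + vecMulVec u u)
      = 1 + (vecMulVec u u + vecMulVec u u) + vecMulVec u u * vecMulVec u u := by
        noncomm_ring
    _ = 1 := by rw [h2, hVV, add_zero, add_zero]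

lemma K_symm (u : Fin n → ZMod 2) : (1 + vecMulVec u u)ᵀ = 1 + vecMulVec u u := by
  rw [transpose_add, transpose_one]
  congr 1
  ext i j
  simp [vecMulVec_apply, mul_comm]

lemma K_mul_col {u : Fin n → ZMod 2} (Q : Matrix (Fin n) (Fin n) (ZMod 2)) (j i : Fin n) :
    ((1 + vecMulVec u u) * Q) j i = Q j i + u j * ∑ l, u l * Q l i := by
  rw [add_mul, one_mul, Matrix.add_apply]
  congr 1
  rw [mul_apply, Finset.mul_sum]
  exact Finset.sum_congr rfl fun l _ => by rw [vecMulVec_apply, mul_assoc]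

def Inv (P : Matrix (Fin n) (Fin n) (ZMod 2)) (k : ℕ) : Prop :=
  ∃ (L : List (Matrix (Fin n) (Fin n) (ZMod 2))) (Q : Matrix (Fin n) (Fin n) (ZMod 2))
    (f : Fin n → Fin n),
    L.length = k ∧
    (∀ A ∈ L, Good A) ∧
    Qᵀ * Q = 1 ∧
    P = L.prod * Q ∧
    (∀ i : Fin n, (i : ℕ) < k → ∀ j, Q j i = if j = f i then 1 else 0) ∧
    (∀ i i' : Fin n, (i : ℕ) < k → (i' : ℕ) < k → f i = f i' → i = i')

lemma inv_zero {P : Matrix (Fin n) (Fin n) (ZMod 2)} (hP : Pᵀ * P = 1) : Inv P 0 :=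
  ⟨[], P, id, rfl, by simp, hP, by simp, fun i hi => absurd hi (Nat.not_lt_zero _),
    fun i i' hi => absurd hi (Nat.not_lt_zero _)⟩

lemma inv_step {P : Matrix (Fin n) (Fin n) (ZMod 2)} {k : ℕ} (hk : k < n) (h : Inv P k) :
    Inv P (k + 1) := by
  obtain ⟨L, Q, f, hlen, hgood, hQ, hPQ, hcol, hinj⟩ := h
  set kf : Fin n := ⟨k, hk⟩ with hkf
  have hkfv : (kf : ℕ) = k := rfl
  set w : Fin n → ZMod 2 := fun j => Q j kf with hw
  have hww : ∑ j, w j * w j = 1 := by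
    have h := col_dot hQ kf kf; rwa [if_pos rfl] at h
  have hsw : ∑ j, w j = 1 := col_sum hQ kf
  -- entries of earlier basis columns vanish in other columns
  have horth0 : ∀ (a i : Fin n), (i : ℕ) < k → a ≠ i → Q (f i) a = 0 := by
    intro a i hi hne
    have h0 := col_dot hQ a i
    rw [if_neg hne] at h0
    have h1 : ∀ j, Q j a * Q j i = if j = f i then Q j a else 0 := by
      intro j
      rw [hcol i hi j]
      split <;> simp
    rw [Finset.sum_congr rfl fun j _ => h1 j, Finset.sum_ite_eq' Finset.univ (f i)] at h0
    simpa using h0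
  have hprev : ∀ i : Fin n, (i : ℕ) < k → w (f i) = 0 := by
    intro i hi
    exact horth0 kf i hi (Fin.ne_of_val_ne (by rw [hkfv]; omega))
  by_cases hA : ∃ m, ∀ j, w j = if j = m then 1 else 0
  · -- column k is already a basis vector
    obtain ⟨m, hm⟩ := hA
    refine ⟨L ++ [1], Q, Function.update f kf m, by simp [hlen], ?_, hQ, ?_, ?_, ?_⟩
    · intro A hA'
      rcases List.mem_append.mp hA' with h' | h'
      · exact hgood A h'
      · left; simpa using h'
    · rw [List.prod_append]; simpa using hPQ
    · intro i hi j
      rcases Nat.lt_succ_iff_lt_or_eq.mp hi with hi' | hi'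
      · have hne : i ≠ kf := Fin.ne_of_val_ne (by rw [hkfv]; omega)
        rw [Function.update_of_ne hne m f]
        exact hcol i hi' j
      · have : i = kf := Fin.ext hi'
        subst this
        rw [Function.update_self]
        exact hm j
    · intro i i' hi hi' he
      by_cases e1 : i = kf <;> by_cases e2 : i' = kf
      · rw [e1, e2]
      · subst e1
        rw [Function.update_self] at he
        have hi'k : (i' : ℕ) < k := by
          rcases Nat.lt_succ_iff_lt_or_eq.mp hi' with h' | h'
          · exact h'
          · exact absurd (Fin.ext h' : i' = kf) e2
        rw [Function.update_of_ne e2] at he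
        have := hprev i' hi'k
        rw [← he] at this
        rw [hm m, if_pos rfl] at this
        exact absurd this one_ne_zero
      · subst e2
        rw [Function.update_self] at he
        have hik : (i : ℕ) < k := by
          rcases Nat.lt_succ_iff_lt_or_eq.mp hi with h' | h'
          · exact h'
          · exact absurd (Fin.ext h' : i = kf) e1
        rw [Function.update_of_ne e1] at he
        have := hprev i hik
        rw [he] at this
        rw [hm m, if_pos rfl] at this
        exact absurd this one_ne_zero
      · have hik : (i : ℕ) < k := by
          rcases Nat.lt_succ_iff_lt_or_eq.mp hi with h' | h'
          · exact h'
          · exact absurd (Fin.ext h' : i = kf) e1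
        have hi'k : (i' : ℕ) < k := by
          rcases Nat.lt_succ_iff_lt_or_eq.mp hi' with h' | h'
          · exact h'
          · exact absurd (Fin.ext h' : i' = kf) e2
        rw [Function.update_of_ne e1, Function.update_of_ne e2] at he
        exact hinj i i' hik hi'k he
  · -- need a genuine reflection; first find a suitable pivot j0
    have hex : ∃ j0, w j0 = 0 ∧ ∀ i : Fin n, (i : ℕ) < k → f i ≠ j0 := by
      by_contra hnex
      push_neg at hnex
      -- every zero of w is hit by f
      have hhit : ∀ j0, w j0 = 0 → ∃ i : Fin n, (i : ℕ) < k ∧ f i = j0 := hnex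
      rcases Nat.lt_or_ge (k + 1) n with hk2 | hk2
      · -- use column k+1 for a contradiction
        set a : Fin n := ⟨k + 1, hk2⟩ with ha
        have hav : (a : ℕ) = k + 1 := rfl
        have hane : a ≠ kf := Fin.ne_of_val_ne (by rw [hav, hkfv]; omega)
        have hsum0 : ∑ j, Q j a * Q j kf = 0 := by
          have h0 := col_dot hQ a kf
          rwa [if_neg hane] at h0
        have hterm : ∀ j, Q j a * w j = Q j a := by
          intro j
          by_cases hj : ∃ i : Fin n, (i : ℕ) < k ∧ f i = j
          · obtain ⟨i, hi, rfl⟩ := hj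
            have hne : a ≠ i := Fin.ne_of_val_ne (by rw [hav]; omega)
            simp [horth0 a i hi hne]
          · have hwj : w j ≠ 0 := fun h0 => hj (hhit j h0)
            rw [ne0 _ hwj, mul_one]
        have : (0 : ZMod 2) = 1 := by
          rw [← hsum0]
          calc ∑ j, Q j a * Q j kf = ∑ j, Q j a := Finset.sum_congr rfl fun j _ => hterm j
            _ = 1 := col_sum hQ a
        exact absurd this.symm one_ne_zero
      · -- k + 1 = n : the complement of the image is a single point, so w is basis
        have hkn : k + 1 = n := le_antisymm hk (by omega) ▸ by omega
        set S : Finset (Fin n) :=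
          (Finset.univ.filter (fun i : Fin n => (i : ℕ) < k)).image f with hS
        have hfilml : (Finset.univ.filter (fun i : Fin n => (i : ℕ) < k))
            = Finset.map (Fin.castLEEmb (le_of_lt hk)) Finset.univ := by
          ext i
          simp only [Finset.mem_filter, Finset.mem_univ, true_and, Finset.mem_map,
            Fin.castLEEmb_apply]
          constructor
          · intro hi; exact ⟨⟨(i : ℕ), hi⟩, Fin.ext rfl⟩
          · rintro ⟨j, rfl⟩; exact j.isLt
        have hcardS : S.card = k := by
          rw [hS, Finset.card_image_of_injOn, hfilml, Finset.card_map, Finset.card_univ,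
            Fintype.card_fin]
          intro i hi i' hi' he
          simp only [Finset.coe_filter, Set.mem_setOf_eq, Finset.mem_univ, true_and] at hi hi'
          exact hinj i i' hi hi' he
        have hTcard : (Finset.univ \ S).card = 1 := by
          rw [Finset.card_sdiff_of_subset (Finset.subset_univ S), Finset.card_univ, Fintype.card_fin,
            hcardS]
          omega
        obtain ⟨m, hmT⟩ := Finset.card_eq_one.mp hTcard
        have hmS : m ∉ S := by
          have : m ∈ Finset.univ \ S := hmT ▸ Finset.mem_singleton_self m
          exact (Finset.mem_sdiff.mp this).2
        have hwS : ∀ j, j ∈ S → w j = 0 := by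
          intro j hj
          obtain ⟨i, hi, rfl⟩ := Finset.mem_image.mp hj
          have hik : (i : ℕ) < k := (Finset.mem_filter.mp hi).2
          exact hprev i hik
        have hwm : w m = 1 := by
          apply ne0
          intro h0
          obtain ⟨i, hik, hfi⟩ := hhit m h0
          exact hmS (Finset.mem_image.mpr ⟨i, Finset.mem_filter.mpr ⟨Finset.mem_univ i, hik⟩, hfi⟩)
        apply hA
        refine ⟨m, fun j => ?_⟩
        by_cases hj : j = m
        · rw [hj, if_pos rfl, hwm]
        · rw [if_neg hj]
          apply hwS
          by_contra hjS
          have : j ∈ Finset.univ \ S := Finset.mem_sdiff.mpr ⟨Finset.mem_univ j, hjS⟩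
          rw [hmT, Finset.mem_singleton] at this
          exact hj this
    obtain ⟨j0, hj00, hj0f⟩ := hex
    set u : Fin n → ZMod 2 := fun j => w j + (if j = j0 then 1 else 0) with hu
    have hsu : ∑ j, u j = 0 := by
      rw [hu]
      rw [Finset.sum_add_distrib, hsw]
      rw [Finset.sum_ite_eq' Finset.univ j0 (fun _ => (1 : ZMod 2))]
      simp [two0]
    have huw : ∑ l, u l * w l = 1 := by
      have h1 : ∀ l, u l * w l = w l * w l + (if l = j0 then w l else 0) := by
        intro l
        rw [hu]
        simp only
        rw [add_mul, ite_mul, one_mul, zero_mul]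
      rw [Finset.sum_congr rfl fun l _ => h1 l, Finset.sum_add_distrib, hww,
        Finset.sum_ite_eq' Finset.univ j0 w]
      simp [hj00]
    have hufi : ∀ i : Fin n, (i : ℕ) < k → u (f i) = 0 := by
      intro i hi
      rw [hu]
      simp only
      rw [hprev i hi, if_neg (hj0f i hi), add_zero]
    set K : Matrix (Fin n) (Fin n) (ZMod 2) := 1 + vecMulVec u u with hK
    have hKK : K * K = 1 := K_invol hsu
    have hQ' : (K * Q)ᵀ * (K * Q) = 1 := by
      rw [transpose_mul, hK, K_symm, ← hK, mul_assoc, ← mul_assoc K K Q, hKK, one_mul, hQ]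
    have hcolK : ∀ i : Fin n, (i : ℕ) < k → ∀ j, (K * Q) j i = Q j i := by
      intro i hi j
      rw [hK, K_mul_col]
      have : ∑ l, u l * Q l i = 0 := by
        have h1 : ∀ l, u l * Q l i = if l = f i then u l else 0 := by
          intro l
          rw [hcol i hi l]
          split <;> simp
        rw [Finset.sum_congr rfl fun l _ => h1 l, Finset.sum_ite_eq' Finset.univ (f i) u]
        simpa using hufi i hi
      rw [this, mul_zero, add_zero]
    have hcolk : ∀ j, (K * Q) j kf = if j = j0 then 1 else 0 := by
      intro j
      rw [hK, K_mul_col]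
      have hQw : ∀ l, Q l kf = w l := fun l => rfl
      rw [Finset.sum_congr rfl fun l _ => by rw [hQw l]]
      rw [huw, mul_one, hQw j, hu]
      simp only
      rw [← add_assoc, CharTwo.add_self_eq_zero, zero_add]
    refine ⟨L ++ [K], K * Q, Function.update f kf j0, by simp [hlen], ?_, hQ', ?_, ?_, ?_⟩
    · intro A hA'
      rcases List.mem_append.mp hA' with h' | h'
      · exact hgood A h'
      · right
        refine ⟨u, hsu, ?_⟩
        simpa [hK] using h'
    · rw [List.prod_append]
      simp only [List.prod_cons, List.prod_nil, mul_one]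
      rw [mul_assoc, ← mul_assoc K K Q, hKK, one_mul]
      exact hPQ
    · intro i hi j
      rcases Nat.lt_succ_iff_lt_or_eq.mp hi with hi' | hi'
      · have hne : i ≠ kf := Fin.ne_of_val_ne (by rw [hkfv]; omega)
        rw [Function.update_of_ne hne j0 f]
        rw [hcolK i hi' j]
        exact hcol i hi' j
      · have : i = kf := Fin.ext hi'
        subst this
        rw [Function.update_self]
        exact hcolk j
    · intro i i' hi hi' he
      by_cases e1 : i = kf <;> by_cases e2 : i' = kf
      · rw [e1, e2]
      · subst e1
        rw [Function.update_self] at he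
        have hi'k : (i' : ℕ) < k := by
          rcases Nat.lt_succ_iff_lt_or_eq.mp hi' with h' | h'
          · exact h'
          · exact absurd (Fin.ext h' : i' = kf) e2
        rw [Function.update_of_ne e2] at he
        exact absurd he.symm (hj0f i' hi'k)
      · subst e2
        rw [Function.update_self] at he
        have hik : (i : ℕ) < k := by
          rcases Nat.lt_succ_iff_lt_or_eq.mp hi with h' | h'
          · exact h'
          · exact absurd (Fin.ext h' : i = kf) e1
        rw [Function.update_of_ne e1] at he
        exact absurd he (hj0f i hik)
      · have hik : (i : ℕ) < k := by
          rcases Nat.lt_succ_iff_lt_or_eq.mp hi with h' | h'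
          · exact h'
          · exact absurd (Fin.ext h' : i = kf) e1
        have hi'k : (i' : ℕ) < k := by
          rcases Nat.lt_succ_iff_lt_or_eq.mp hi' with h' | h'
          · exact h'
          · exact absurd (Fin.ext h' : i' = kf) e2
        rw [Function.update_of_ne e1, Function.update_of_ne e2] at he
        exact hinj i i' hik hi'k he

end OrthFact

open OrthFact

theorem orthogonal_factorization {n : ℕ} (P : Matrix (Fin n) (Fin n) (ZMod 2))
    (hP : Pᵀ * P = 1) :
    ∃ (K : Fin n → Matrix (Fin n) (Fin n) (ZMod 2)) (π : Equiv.Perm (Fin n)),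
      (∀ i, K i = 1 ∨ ∃ u : Fin n → ZMod 2,
        (∑ j, u j = 0) ∧ K i = 1 + Matrix.vecMulVec u u) ∧
      P = (List.ofFn K).prod * π.permMatrix (ZMod 2) := by
  have hinvn : Inv P n := by
    have H : ∀ k, k ≤ n → Inv P k := by
      intro k
      induction k with
      | zero => intro _; exact inv_zero hP
      | succ k ih =>
        intro hkn
        exact inv_step (Nat.lt_of_succ_le hkn) (ih (Nat.le_of_succ_le hkn))
    exact H n le_rfl
  obtain ⟨L, Q, f, hlen, hgood, hQ, hPQ, hcol, hinj⟩ := hinvn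
  have hfinj : Function.Injective f := fun i i' h => hinj i i' i.isLt i'.isLt h
  have hfbij : Function.Bijective f := Finite.injective_iff_bijective.mp hfinj
  set π0 : Equiv.Perm (Fin n) := Equiv.ofBijective f hfbij with hπ0
  have hQperm : Q = (π0⁻¹).permMatrix (ZMod 2) := by
    ext j i
    rw [hcol i i.isLt j]
    have hpm : (π0⁻¹).permMatrix (ZMod 2) j i = if π0⁻¹ j = i then 1 else 0 := by
      simp [Equiv.Perm.permMatrix, PEquiv.toMatrix, Equiv.toPEquiv]
    rw [hpm]
    have hcond : (j = f i) ↔ (π0⁻¹ j = i) := by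
      constructor
      · intro h; rw [h]; exact π0.symm_apply_apply i
      · intro h; rw [← h]; exact (π0.apply_symm_apply j).symm
    by_cases hc : j = f i
    · rw [if_pos hc, if_pos (hcond.mp hc)]
    · rw [if_neg hc, if_neg (fun h => hc (hcond.mpr h))]
  set K : Fin n → Matrix (Fin n) (Fin n) (ZMod 2) :=
    fun i => L.get (Fin.cast hlen.symm i) with hKdef
  have hofn : List.ofFn K = L := by
    apply List.ext_getElem
    · simp [hlen]
    · intro i h1 h2
      simp [hKdef, List.getElem_ofFn]
  refine ⟨K, π0⁻¹, ?_, ?_⟩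
  · intro i
    exact hgood _ (by apply List.get_mem)
  · rw [hofn, ← hQperm]
    exact hPQ
end
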